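/- Let k, s be positive integers and G₀, H₀ graphs containing no K_s. Then there exist graphs G and H containing no K_s such that: whenever the intermediate edges of the pair graph G ∗ H are coloured with k colours, there exist copies G₀ ⊆ G and H₀ ⊆ H such that all edges between these copies receive the same colour. -/

import Mathlib

/-!
The vertex Folkman theorem, by the partite construction of Nešetřil and Rödl. Start with disjoint
copies of `G₀`, one for each injection of `V(G₀)` into a set of parts, and treat the parts one at
a time: part `i` becomes a large shared set `Y`, and the old graph is glued in once for each
injection of part `i` into `Y`, its other parts duplicated. A clique with two or more vertices
meets a duplicated part, hence lies in one copy, so no `K_s` appears; by pigeonhole some injection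
lands in one colour class of `Y`, making the copies inside that old graph monochromatic on part
`i`. At the end every part has a colour, and pigeonhole gives `|V(G₀)|` parts of one colour, which
carry a monochromatic copy of `G₀`.

For the pair graph take such a `G` for `G₀` with `k` colours, then such an `H` for `H₀` whose
colours are the `k`-colourings of `V(G)`, vertex `v` of `H` being coloured by `c (·, v)`.
-/

namespace SimpleGraph

lemma CliqueFree.of_hom {α β : Type*} {G : SimpleGraph α} {H : SimpleGraph β} {n : ℕ}
    (f : G →g H) (h : H.CliqueFree n) : G.CliqueFree n := by
  rw [cliqueFree_iff] at h ⊢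
  exact ⟨fun κ => h.false ⟨f.comp κ.toHom, Hom.injective_of_top_hom _⟩⟩

theorem cliqueFree_bot_boxProd {X α : Type*} {G₀ : SimpleGraph α} {s : ℕ}
    (hG₀ : G₀.CliqueFree s) : ((⊥ : SimpleGraph X) □ G₀).CliqueFree s :=
  hG₀.of_hom ⟨Prod.snd, fun h => (by simpa using h : _ ∧ _).1⟩

namespace Coloring

variable {β ι : Type*} [DecidableEq ι] {G : SimpleGraph β}
  (C : G.Coloring ι) (i : ι) (Y : Type*)

abbrev AmalgamVert := Y ⊕ (({v // C v = i} ↪ Y) × {v // C v ≠ i})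

variable {C i Y}

def amalgamCopy (φ : {v // C v = i} ↪ Y) : β ↪ C.AmalgamVert i Y where
  toFun v := if h : C v = i then .inl (φ ⟨v, h⟩) else .inr (φ, ⟨v, h⟩)
  inj' u v h := by
    by_cases hu : C u = i <;> by_cases hv : C v = i <;>
      simp [hu, hv, Subtype.ext_iff] at h ⊢ <;> grind

lemma amalgamCopy_of_eq (φ : {v // C v = i} ↪ Y) {v : β} (h : C v = i) :
    amalgamCopy φ v = .inl (φ ⟨v, h⟩) :=
  dif_pos h

lemma amalgamCopy_of_ne (φ : {v // C v = i} ↪ Y) {v : β} (h : C v ≠ i) :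
    amalgamCopy φ v = .inr (φ, ⟨v, h⟩) :=
  dif_neg h

lemma eq_and_eq_of_amalgamCopy_eq {φ ψ : {v // C v = i} ↪ Y} {u v : β} (hu : C u ≠ i)
    (h : amalgamCopy φ u = amalgamCopy ψ v) : φ = ψ ∧ u = v := by
  rw [amalgamCopy_of_ne φ hu] at h
  by_cases hv : C v = i
  · simp [amalgamCopy_of_eq ψ hv] at h
  · simpa only [amalgamCopy_of_ne ψ hv, Sum.inr.injEq, Prod.mk.injEq, Subtype.ext_iff] using h

variable (C i Y) in
def amalgam : SimpleGraph (C.AmalgamVert i Y) :=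
  ⨆ φ : {v // C v = i} ↪ Y, G.map (amalgamCopy φ)

lemma amalgam_adj_amalgamCopy_iff (φ : {v // C v = i} ↪ Y) {u v : β} :
    (C.amalgam i Y).Adj (amalgamCopy φ u) (amalgamCopy φ v) ↔ G.Adj u v := by
  refine ⟨fun h => ?_, fun h => iSup_adj.2 ⟨φ, (map_adj _ _ _ _).2 ⟨u, v, h, rfl, rfl⟩⟩⟩
  obtain ⟨ψ, u', v', huv, hu, hv⟩ := by simpa only [amalgam, iSup_adj, map_adj] using h
  rcases (C.valid huv).ne_or_ne i with hu' | hv'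
  · obtain ⟨rfl, rfl⟩ := eq_and_eq_of_amalgamCopy_eq hu' hu
    rwa [← (amalgamCopy ψ).injective hv]
  · obtain ⟨rfl, rfl⟩ := eq_and_eq_of_amalgamCopy_eq hv' hv
    rwa [← (amalgamCopy ψ).injective hu]

def amalgamEmbedding (φ : {v // C v = i} ↪ Y) : G ↪g C.amalgam i Y :=
  ⟨amalgamCopy φ, amalgam_adj_amalgamCopy_iff φ⟩

variable (C i Y) in
def amalgamPart : C.AmalgamVert i Y → ι :=
  Sum.elim (fun _ => i) fun w => C w.2

lemma amalgamPart_amalgamCopy (φ : {v // C v = i} ↪ Y) (v : β) :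
    C.amalgamPart i Y (amalgamCopy φ v) = C v := by
  by_cases h : C v = i
  · simp [amalgamPart, amalgamCopy_of_eq φ h, h]
  · simp [amalgamPart, amalgamCopy_of_ne φ h]

variable (C i Y) in
def amalgamColoring : (C.amalgam i Y).Coloring ι :=
  Coloring.mk (C.amalgamPart i Y) fun {x y} h => by
    obtain ⟨φ, u, v, huv, rfl, rfl⟩ := by simpa only [amalgam, iSup_adj, map_adj] using h
    rw [amalgamPart_amalgamCopy, amalgamPart_amalgamCopy]
    exact C.valid huv

lemma mem_range_amalgamCopy_of_adj_inr {φ : {v // C v = i} ↪ Y} {w : {v // C v ≠ i}}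
    {x : C.AmalgamVert i Y} (h : (C.amalgam i Y).Adj x (.inr (φ, w))) :
    x ∈ Set.range (amalgamCopy φ) := by
  obtain ⟨ψ, u, v, -, rfl, hv⟩ := by simpa only [amalgam, iSup_adj, map_adj] using h
  rw [← amalgamCopy_of_ne φ w.2] at hv
  obtain ⟨rfl, -⟩ := eq_and_eq_of_amalgamCopy_eq w.2 hv.symm
  exact ⟨u, rfl⟩

lemma exists_inr_of_amalgam_adj {x y : C.AmalgamVert i Y} (h : (C.amalgam i Y).Adj x y) :
    ∃ φ w, x = .inr (φ, w) ∨ y = .inr (φ, w) := by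
  have hxy := (C.amalgamColoring i Y).valid h
  rcases x with _ | ⟨φ, w⟩
  · rcases y with _ | ⟨φ, w⟩
    · exact absurd rfl hxy
    · exact ⟨φ, w, .inr rfl⟩
  · exact ⟨φ, w, .inl rfl⟩

lemma cliqueFree_amalgam {s : ℕ} (hs : 2 ≤ s) (hG : G.CliqueFree s) :
    (C.amalgam i Y).CliqueFree s := by
  rw [cliqueFree_iff] at hG ⊢
  refine ⟨fun κ => ?_⟩
  have hκ : ∃ φ, ∀ j, κ j ∈ Set.range (amalgamCopy φ) := by
    have h01 : (⟨0, by omega⟩ : Fin s) ≠ ⟨1, by omega⟩ := Fin.ne_of_val_ne (by simp)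
    obtain ⟨φ, w, j, hj⟩ : ∃ φ w, ∃ j, κ j = .inr (φ, w) := by
      obtain ⟨φ, w, h | h⟩ := exists_inr_of_amalgam_adj (κ.toHom.map_adj ((top_adj _ _).2 h01))
      exacts [⟨φ, w, _, h⟩, ⟨φ, w, _, h⟩]
    refine ⟨φ, fun j' => ?_⟩
    by_cases hjj : j' = j
    · rw [hjj, hj]
      exact ⟨w, amalgamCopy_of_ne φ w.2⟩
    · exact mem_range_amalgamCopy_of_adj_inr (hj ▸ κ.toHom.map_adj ((top_adj _ _).2 hjj))
  obtain ⟨φ, hφ⟩ := hκ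
  choose g hg using hφ
  refine hG.false ⟨⟨g, fun {j j'} hjj' => ?_⟩, Hom.injective_of_top_hom _⟩
  rw [← amalgam_adj_amalgamCopy_iff φ, hg, hg]
  exact κ.toHom.map_adj hjj'

end Coloring

universe u

variable {α β ι : Type*} {G₀ : SimpleGraph α} {G : SimpleGraph β}

def HasCanonicalCopies (γ : Type*) (G₀ : SimpleGraph α) (C : G.Coloring ι) (S : Set ι) : Prop :=
  ∀ c : β → γ, ∃ d : ι → γ, ∀ e : α ↪ ι, ∃ f : G₀ ↪g G,
    (∀ x, C (f x) = e x) ∧ ∀ x, e x ∈ S → c (f x) = d (e x)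

variable (ι G₀) in
def transversalColoring : ((⊥ : SimpleGraph (α ↪ ι)) □ G₀).Coloring ι :=
  Coloring.mk (fun p => p.1 p.2) fun {p q} h => by
    obtain ⟨h, -⟩ | ⟨h, he⟩ := boxProd_adj.1 h
    · exact h.elim
    · rw [he]
      exact q.1.injective.ne h.ne

lemma hasCanonicalCopies_transversalColoring (γ : Type*) [Nonempty γ] :
    HasCanonicalCopies γ G₀ (transversalColoring ι G₀) ∅ :=
  fun _ => ⟨fun _ => Classical.arbitrary γ,
    fun e => ⟨boxProdRight ⊥ G₀ e, fun _ => rfl, fun _ h => h.elim⟩⟩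

theorem HasCanonicalCopies.amalgam {γ Y : Type*} [DecidableEq ι] [Fintype β] [Fintype Y]
    [Fintype γ] [Nonempty γ] {C : G.Coloring ι} {S : Set ι} (h : HasCanonicalCopies γ G₀ C S)
    (i : ι) (hY : Fintype.card γ * Fintype.card {v // C v = i} ≤ Fintype.card Y) :
    HasCanonicalCopies γ G₀ (C.amalgamColoring i Y) (insert i S) := by
  classical
  intro c
  obtain ⟨col, hcol⟩ := Fintype.exists_le_card_fiber_of_mul_le_card (f := fun y => c (.inl y)) hY
  obtain ⟨φ, hφ⟩ := Function.Embedding.exists_of_card_le_finset hcol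
  obtain ⟨d, hd⟩ := h (c ∘ Coloring.amalgamCopy φ)
  refine ⟨Function.update d i col, fun e => ?_⟩
  obtain ⟨f, hfe, hfc⟩ := hd e
  refine ⟨(Coloring.amalgamEmbedding φ).comp f,
    fun x => (Coloring.amalgamPart_amalgamCopy φ _).trans (hfe x), fun x hx => ?_⟩
  by_cases hxi : e x = i
  · have hfx : C (f x) = i := (hfe x).trans hxi
    have hcolx := hφ ⟨⟨f x, hfx⟩, rfl⟩
    simp only [Finset.coe_filter, Finset.mem_univ, true_and, Set.mem_ofPred_eq] at hcolx
    simpa [Coloring.amalgamEmbedding, Coloring.amalgamCopy_of_eq φ hfx, hxi] using hcolx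
  · rw [Function.update_of_ne hxi]
    exact hfc x (hx.resolve_left hxi)

theorem exists_hasCanonicalCopies {α ι : Type u} [Fintype α] [Fintype ι] [DecidableEq ι]
    {G₀ : SimpleGraph α} {s : ℕ} (hs : 2 ≤ s) (hG₀ : G₀.CliqueFree s)
    (γ : Type*) [Fintype γ] [Nonempty γ] (S : Finset ι) :
    ∃ (β : Type u) (_ : Fintype β) (G : SimpleGraph β) (C : G.Coloring ι),
      G.CliqueFree s ∧ HasCanonicalCopies γ G₀ C S := by
  classical
  induction S using Finset.induction_on with
  | empty =>
    exact ⟨_, inferInstance, _, transversalColoring ι G₀, cliqueFree_bot_boxProd hG₀,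
      by simpa using hasCanonicalCopies_transversalColoring γ⟩
  | insert i S _ ih =>
    obtain ⟨β, _, G, C, hG, hC⟩ := ih
    let Y := Fin (Fintype.card γ * Fintype.card {v // C v = i})
    exact ⟨_, inferInstance, _, C.amalgamColoring i Y, C.cliqueFree_amalgam hs hG,
      by simpa using hC.amalgam i (Y := Y) (by simp [Y])⟩

theorem exists_cliqueFree_forall_exists_monochromatic_embedding {α : Type u} [Fintype α]
    {G₀ : SimpleGraph α} {s : ℕ} (hG₀ : G₀.CliqueFree s) (γ : Type*) [Fintype γ] [Nonempty γ] :
    ∃ (n : ℕ) (G : SimpleGraph (Fin n)), G.CliqueFree s ∧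
      ∀ c : Fin n → γ, ∃ (f : G₀ ↪g G) (col : γ), ∀ x, c (f x) = col := by
  classical
  obtain hs | hs := lt_or_ge s 2
  · have : IsEmpty α := cliqueFree_one.1 (hG₀.mono (by omega))
    have : s ≠ 0 := by rintro rfl; exact not_cliqueFree_zero hG₀
    exact ⟨0, ⊥, cliqueFree_of_card_lt (by simp; omega), fun c =>
      ⟨⟨Function.Embedding.ofIsEmpty, fun {a} => isEmptyElim a⟩, Classical.arbitrary γ,
        isEmptyElim⟩⟩
  obtain ⟨β, _, G, C, hG, hC⟩ :=
    exists_hasCanonicalCopies hs hG₀ γ (Finset.univ : Finset (Fin (Fintype.card γ) × α))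
  let φ := G.overFinIso rfl
  refine ⟨_, G.overFin rfl, hG.comap φ.isContained', fun c => ?_⟩
  obtain ⟨d, hd⟩ := hC (c ∘ φ)
  obtain ⟨col, hcol⟩ :=
    Fintype.exists_le_card_fiber_of_mul_le_card (f := d) (n := Fintype.card α) (by simp)
  obtain ⟨e, he⟩ := Function.Embedding.exists_of_card_le_finset hcol
  obtain ⟨f, -, hf⟩ := hd e
  refine ⟨φ.toEmbedding.comp f, col, fun x => ?_⟩
  have hcolx := he ⟨x, rfl⟩
  simp only [Finset.coe_filter, Finset.mem_univ, true_and, Set.mem_ofPred_eq] at hcolx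
  exact (hf x (by simp)).trans hcolx

end SimpleGraph

open SimpleGraph in
theorem stmt_14_general (k s : ℕ) (hk : 1 ≤ k)
    {a b : ℕ} (G₀ : SimpleGraph (Fin a)) (H₀ : SimpleGraph (Fin b))
    (hG₀ : G₀.CliqueFree s) (hH₀ : H₀.CliqueFree s) :
    ∃ (n m : ℕ) (G : SimpleGraph (Fin n)) (H : SimpleGraph (Fin m)),
      G.CliqueFree s ∧ H.CliqueFree s ∧
      -- whenever the intermediate edges of the pair graph G ∗ H are k-coloured,
      -- there are copies of G₀ in G and H₀ in H with all intermediate edges monochromatic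
      ∀ c : Fin n → Fin m → Fin k,
        ∃ (f : Fin a → Fin n) (g : Fin b → Fin m),
          Function.Injective f ∧ Function.Injective g ∧
          (∀ u v : Fin a, G₀.Adj u v → G.Adj (f u) (f v)) ∧
          (∀ u v : Fin b, H₀.Adj u v → H.Adj (g u) (g v)) ∧
          ∃ col : Fin k, ∀ (u : Fin a) (v : Fin b), c (f u) (g v) = col := by
  have : Nonempty (Fin k) := ⟨⟨0, hk⟩⟩
  obtain ⟨n, G, hG, hGc⟩ := exists_cliqueFree_forall_exists_monochromatic_embedding hG₀ (Fin k)
  obtain ⟨m, H, hH, hHc⟩ :=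
    exists_cliqueFree_forall_exists_monochromatic_embedding hH₀ (Fin n → Fin k)
  refine ⟨n, m, G, H, hG, hH, fun c => ?_⟩
  obtain ⟨g, P, hP⟩ := hHc fun v u => c u v
  obtain ⟨f, col, hcol⟩ := hGc P
  exact ⟨f, g, f.injective, g.injective, fun _ _ => f.map_adj_iff.2, fun _ _ => g.map_adj_iff.2,
    col, fun u v => by rw [← hcol u, ← hP v]⟩

theorem stmt_14 (k s : ℕ) (hk : 1 ≤ k) (hs : 1 ≤ s)
    {a b : ℕ} (G₀ : SimpleGraph (Fin a)) (H₀ : SimpleGraph (Fin b))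
    (hG₀ : G₀.CliqueFree s) (hH₀ : H₀.CliqueFree s) :
    ∃ (n m : ℕ) (G : SimpleGraph (Fin n)) (H : SimpleGraph (Fin m)),
      G.CliqueFree s ∧ H.CliqueFree s ∧
      -- whenever the intermediate edges of the pair graph G ∗ H are k-coloured,
      -- there are copies of G₀ in G and H₀ in H with all intermediate edges monochromatic
      ∀ c : Fin n → Fin m → Fin k,
        ∃ (f : Fin a → Fin n) (g : Fin b → Fin m),
          Function.Injective f ∧ Function.Injective g ∧
          (∀ u v : Fin a, G₀.Adj u v → G.Adj (f u) (f v)) ∧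
          (∀ u v : Fin b, H₀.Adj u v → H.Adj (g u) (g v)) ∧
          ∃ col : Fin k, ∀ (u : Fin a) (v : Fin b), c (f u) (g v) = col :=
  stmt_14_general k s hk G₀ H₀ hG₀ hH₀
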